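/- Let k > 0, let v : ℝ³ → ℝ³ be a C¹ vector field, and let λ : ℝ³ → ℝ be a C¹ function with compact support satisfying kλ(x) + (v·∇λ)(x) + ½(div v)(x)·λ(x) = 0 for every x ∈ ℝ³. Then λ is identically zero. -/

import Mathlib

/-!
Multiplying the equation by `2λ` turns it into `2kλ² + div(λ² v) = 0`. The divergence of
the compactly supported field `λ² v` integrates to zero, so `k ∫ λ² = 0`, and a continuous
nonnegative function with vanishing integral is zero.
-/

open MeasureTheory

noncomputable section

/-- Partial derivative in the `i`-th coordinate direction on `ℝ³`. -/
def pd {F : Type*} [NormedAddCommGroup F] [NormedSpace ℝ F]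
    (f : EuclideanSpace ℝ (Fin 3) → F) (i : Fin 3) (x : EuclideanSpace ℝ (Fin 3)) : F :=
  fderiv ℝ f x (EuclideanSpace.single i 1)

/-- Divergence of a vector field on `ℝ³`. -/
def divg (v : EuclideanSpace ℝ (Fin 3) → EuclideanSpace ℝ (Fin 3))
    (x : EuclideanSpace ℝ (Fin 3)) : ℝ :=
  ∑ i, pd (fun y => v y i) i x

local notation "ℝ³" => EuclideanSpace ℝ (Fin 3)

section PartialDerivatives

variable {F : Type*} [NormedAddCommGroup F] [NormedSpace ℝ F]

theorem ContDiff.continuous_pd {f : ℝ³ → F} (hf : ContDiff ℝ 1 f) (i : Fin 3) :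
    Continuous (pd f i) :=
  (hf.continuous_fderiv one_ne_zero).clm_apply continuous_const

theorem HasCompactSupport.pd {f : ℝ³ → F} (hf : HasCompactSupport f) (i : Fin 3) :
    HasCompactSupport (pd f i) :=
  (hf.fderiv ℝ).comp_left (g := fun L : ℝ³ →L[ℝ] F => L (EuclideanSpace.single i 1)) rfl

theorem pd_mul {f g : ℝ³ → ℝ} {x : ℝ³} (hf : DifferentiableAt ℝ f x)
    (hg : DifferentiableAt ℝ g x) (i : Fin 3) :
    pd (fun y => f y * g y) i x = f x * pd g i x + g x * pd f i x := by
  simp [pd, fderiv_fun_mul hf hg]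

theorem continuous_divg {v : ℝ³ → ℝ³} (hv : ContDiff ℝ 1 v) : Continuous (divg v) :=
  continuous_finsetSum _ fun i _ => ((contDiff_piLp 2).1 hv i).continuous_pd i

end PartialDerivatives

theorem integral_mul_pd_eq_neg_integral_pd_mul {f q : ℝ³ → ℝ} (hf : ContDiff ℝ 1 f)
    (hq : ContDiff ℝ 1 q) (hqs : HasCompactSupport q) (i : Fin 3) :
    ∫ x, f x * pd q i x = -∫ x, pd f i x * q x :=
  integral_mul_fderiv_eq_neg_fderiv_mul_of_integrable
    ((hf.continuous_pd i).mul hq.continuous |>.integrable_of_hasCompactSupport hqs.mul_left)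
    (hf.continuous.mul (hq.continuous_pd i) |>.integrable_of_hasCompactSupport (hqs.pd i).mul_left)
    (hf.continuous.mul hq.continuous |>.integrable_of_hasCompactSupport hqs.mul_left)
    (fun _ _ => (hf.differentiable one_ne_zero).differentiableAt)
    (fun _ _ => (hq.differentiable one_ne_zero).differentiableAt)

theorem integral_sum_mul_pd_add_divg_mul_eq_zero {v : ℝ³ → ℝ³} {q : ℝ³ → ℝ}
    (hv : ContDiff ℝ 1 v) (hq : ContDiff ℝ 1 q) (hqs : HasCompactSupport q) :
    ∫ x, (∑ i, v x i * pd q i x + divg v x * q x) = 0 := by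
  have hvi : ∀ i, ContDiff ℝ 1 fun x => v x i := (contDiff_piLp 2).1 hv
  have hint_advection : ∀ i ∈ Finset.univ, Integrable fun x => v x i * pd q i x := fun i _ =>
    (hvi i).continuous.mul (hq.continuous_pd i) |>.integrable_of_hasCompactSupport
      (hqs.pd i).mul_left
  have hint_pd_mul : ∀ i ∈ Finset.univ, Integrable fun x => pd (fun y => v y i) i x * q x :=
    fun i _ => ((hvi i).continuous_pd i).mul hq.continuous |>.integrable_of_hasCompactSupport
      hqs.mul_left
  have hdivg : ∫ x, divg v x * q x = ∑ i, ∫ x, pd (fun y => v y i) i x * q x := by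
    rw [← integral_finsetSum _ hint_pd_mul]
    simp only [divg, Finset.sum_mul]
  have hint_divg : Integrable fun x => divg v x * q x :=
    (continuous_divg hv).mul hq.continuous |>.integrable_of_hasCompactSupport hqs.mul_left
  rw [integral_add (integrable_finsetSum _ hint_advection) hint_divg,
    integral_finsetSum _ hint_advection, hdivg]
  simp only [integral_mul_pd_eq_neg_integral_pd_mul (hvi _) hq hqs, Finset.sum_neg_distrib,
    neg_add_cancel]

/-- uniqueness for the stationary transport equation: if `k > 0`,
`v` is a `C¹` vector field, and `λ` is a compactly supported `C¹` function with
`kλ + v·∇λ + ½(div v)λ = 0` everywhere, then `λ ≡ 0`. -/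
theorem transport_uniqueness
    (k : ℝ) (hk : 0 < k)
    (v : EuclideanSpace ℝ (Fin 3) → EuclideanSpace ℝ (Fin 3))
    (l : EuclideanSpace ℝ (Fin 3) → ℝ)
    (hv : ContDiff ℝ 1 v) (hl : ContDiff ℝ 1 l) (hls : HasCompactSupport l)
    (heq : ∀ x, k * l x + (∑ i, v x i * pd l i x)
        + (1 / 2) * divg v x * l x = 0) :
    ∀ x, l x = 0 := by
  set q := fun x => l x * l x
  have hqc : ContDiff ℝ 1 q := hl.mul hl
  have hqs : HasCompactSupport q := hls.mul_right
  have hdivergence : ∀ x, ∑ i, v x i * pd q i x + divg v x * q x = -(2 * k) * q x := by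
    intro x
    have hl' := (hl.differentiable one_ne_zero).differentiableAt (x := x)
    have hsum : ∑ i, v x i * pd q i x = 2 * l x * ∑ i, v x i * pd l i x := by
      rw [Finset.mul_sum]
      exact Finset.sum_congr rfl fun i _ => by rw [pd_mul hl' hl']; ring
    rw [hsum]
    linear_combination (2 * l x) * heq x
  have hintegral : -(2 * k) * ∫ x, q x = 0 := by
    rw [← integral_const_mul, ← integral_sum_mul_pd_add_divg_mul_eq_zero hv hqc hqs]
    simp only [hdivergence]
  intro x
  by_contra hx
  have hpos : 0 < ∫ x, q x :=
    hqc.continuous.integral_pos_of_hasCompactSupport_nonneg_nonzero hqs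
      (fun y => mul_self_nonneg (l y)) (mul_self_ne_zero.2 hx)
  nlinarith

end
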